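/- Let p be an odd prime. Any metric p-group (A, q) of exponent p^e that is generated by its isotropic elements decomposes as an orthogonal direct sum of the hyperbolic metric group (Z/p^e Z × Z/p^e Z, h) and a metric p-group of exponent at most p^e. -/

import Mathlib

/-- The bilinear form associated to a quadratic form `q : A → kˣ`. -/
def Bform {A k : Type*} [AddCommGroup A] [Field k] (q : A → kˣ) (x y : A) : kˣ :=
  q (x + y) * (q x * q y)⁻¹

/-- `q : A → kˣ` is a quadratic form: `q(-x) = q(x)` and its associated form is bilinear. -/
def IsQuadraticForm {A k : Type*} [AddCommGroup A] [Field k] (q : A → kˣ) : Prop :=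
  (∀ x, q (-x) = q x) ∧ ∀ x y z, Bform q (x + y) z = Bform q x z * Bform q y z

/-- Non-degeneracy of the bilinear form associated to `q`. -/
def Nondeg {A k : Type*} [AddCommGroup A] [Field k] (q : A → kˣ) : Prop :=
  ∀ x, (∀ y, Bform q x y = 1) → x = 0

/-!
Pick an isotropic element `a` of maximal order `p^e`; one exists because isotropic elements
generate `A`. Non-degeneracy gives `b` with `ζ = B(a, b)` a primitive `p^e`-th root of unity.
Since `p` is odd, `q b` is itself a `p^e`-th root of unity, as `q b ^ (2 p^e) = B(b, b) ^ p^e = 1`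
and `q b ^ (p^e)^2 = q (p^e b) = 1`; writing `q b = ζ^s`, the element `c = b - s a` is isotropic
with `B(a, c) = ζ`. The pair `a, c` spans a copy of the hyperbolic plane on which
`B` is non-degenerate, so `A` splits as that plane plus its orthogonal complement.
-/

theorem bform_comm {A k : Type*} [AddCommGroup A] [Field k] (q : A → kˣ) (x y : A) :
    Bform q x y = Bform q y x := by
  simp only [Bform, add_comm x y, mul_comm (q x) (q y)]

theorem apply_add_eq_mul_bform {A k : Type*} [AddCommGroup A] [Field k] (q : A → kˣ) (x y : A) :
    q (x + y) = q x * q y * Bform q x y := by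
  rw [Bform, mul_comm (q (x + y)), ← mul_assoc, mul_inv_cancel, one_mul]

theorem AddMonoid.exists_mem_nsmul_ne_zero_of_closure_eq_top {G : Type*} [AddCommGroup G]
    {S : Set G} (hS : AddSubgroup.closure S = ⊤) {n : ℕ} (hn : ¬AddMonoid.exponent G ∣ n) :
    ∃ s ∈ S, n • s ≠ 0 := by
  contrapose! hn
  have hle : AddSubgroup.closure S ≤ (nsmulAddMonoidHom (α := G) n).ker :=
    (AddSubgroup.closure_le _).2 hn
  exact AddMonoid.exponent_dvd_iff_forall_nsmul_eq_zero.2 fun g =>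
    hle (hS ▸ AddSubgroup.mem_top g)

theorem IsPrimitiveRoot.eq_zero_of_pow_val_eq_one {M : Type*} [CommMonoid M] {n : ℕ} [NeZero n]
    {ζ : M} (hζ : IsPrimitiveRoot ζ n) {m : ZMod n} (hm : ζ ^ m.val = 1) : m = 0 :=
  (ZMod.val_eq_zero m).1 (Nat.eq_zero_of_dvd_of_lt ((hζ.pow_eq_one_iff_dvd _).1 hm) m.val_lt)

theorem IsPrimitiveRoot.exists_pow_val_eq {R : Type*} [CommRing R] [IsDomain R] {n : ℕ}
    [NeZero n] {ζ ξ : Rˣ} (hζ : IsPrimitiveRoot ζ n) (hξ : ξ ^ n = 1) :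
    ∃ m : ZMod n, ζ ^ m.val = ξ := by
  obtain ⟨i, hi, rfl⟩ := hζ.eq_pow_of_mem_rootsOfUnity ((mem_rootsOfUnity n ξ).2 hξ)
  exact ⟨i, by rw [ZMod.val_cast_of_lt hi]⟩

section ZModPair

variable {A : Type*} [AddCommGroup A] {n : ℕ}

def zmodMultiplesHom (x : A) (hx : n • x = 0) : ZMod n →+ A :=
  ZMod.lift n ⟨zmultiplesHom A x, by simpa [natCast_zsmul] using hx⟩

theorem zmodMultiplesHom_apply [NeZero n] (x : A) (hx : n • x = 0) (m : ZMod n) :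
    zmodMultiplesHom x hx m = m.val • x := by
  conv_lhs => rw [← ZMod.natCast_zmod_val m, ← Int.cast_natCast]
  rw [zmodMultiplesHom, ZMod.lift_coe, zmultiplesHom_apply, natCast_zsmul]

def zmodPairHom (hA : ∀ x : A, n • x = 0) (a c : A) : ZMod n × ZMod n →+ A :=
  (zmodMultiplesHom a (hA a)).coprod (zmodMultiplesHom c (hA c))

theorem zmodPairHom_apply [NeZero n] (hA : ∀ x : A, n • x = 0) (a c : A)
    (z : ZMod n × ZMod n) : zmodPairHom hA a c z = z.1.val • a + z.2.val • c := by
  rw [zmodPairHom, AddMonoidHom.coprod_apply, zmodMultiplesHom_apply, zmodMultiplesHom_apply]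

end ZModPair

namespace IsQuadraticForm

variable {A k : Type*} [AddCommGroup A] [Field k] {q : A → kˣ}

theorem bform_add_left (hq : IsQuadraticForm q) (x y z : A) :
    Bform q (x + y) z = Bform q x z * Bform q y z :=
  hq.2 x y z

theorem bform_add_right (hq : IsQuadraticForm q) (x y z : A) :
    Bform q x (y + z) = Bform q x y * Bform q x z := by
  rw [bform_comm, hq.bform_add_left, bform_comm q y, bform_comm q z]

theorem bform_zero_left (hq : IsQuadraticForm q) (y : A) : Bform q 0 y = 1 := by
  simpa using hq.bform_add_left 0 0 y

theorem bform_zero_right (hq : IsQuadraticForm q) (x : A) : Bform q x 0 = 1 := by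
  rw [bform_comm, hq.bform_zero_left]

theorem apply_zero (hq : IsQuadraticForm q) : q 0 = 1 := by
  simpa [Bform] using hq.bform_zero_left 0

theorem bform_neg_right (hq : IsQuadraticForm q) (x y : A) :
    Bform q x (-y) = (Bform q x y)⁻¹ := by
  rw [eq_inv_iff_mul_eq_one, ← hq.bform_add_right, neg_add_cancel, hq.bform_zero_right]

theorem bform_nsmul_left (hq : IsQuadraticForm q) (n : ℕ) (x y : A) :
    Bform q (n • x) y = Bform q x y ^ n := by
  induction n with
  | zero => simpa using hq.bform_zero_left y
  | succ n ih => rw [succ_nsmul, hq.bform_add_left, ih, pow_succ]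

theorem bform_nsmul_right (hq : IsQuadraticForm q) (n : ℕ) (x y : A) :
    Bform q x (n • y) = Bform q x y ^ n := by
  rw [bform_comm, hq.bform_nsmul_left, bform_comm]

theorem bform_self (hq : IsQuadraticForm q) (x : A) : Bform q x x = q x ^ 2 := by
  apply inv_injective
  rw [← hq.bform_neg_right, Bform, add_neg_cancel, hq.apply_zero, hq.1, one_mul, sq]

theorem apply_nsmul (hq : IsQuadraticForm q) (n : ℕ) (x : A) : q (n • x) = q x ^ n ^ 2 := by
  induction n with
  | zero => simpa using hq.apply_zero
  | succ n ih =>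
    rw [succ_nsmul, apply_add_eq_mul_bform q, ih, hq.bform_nsmul_left, hq.bform_self, ← pow_mul,
      ← pow_succ, ← pow_add]
    ring_nf

theorem pow_eq_one_of_nsmul_eq_zero (hq : IsQuadraticForm q) {n : ℕ} (hn : Odd n) {x : A}
    (hx : n • x = 0) : q x ^ n = 1 := by
  have hsq : q x ^ n ^ 2 = 1 := by rw [← hq.apply_nsmul, hx, hq.apply_zero]
  have htwo : q x ^ (n * 2) = 1 := by
    rw [mul_comm, pow_mul, ← hq.bform_self, ← hq.bform_nsmul_left, hx, hq.bform_zero_left]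
  have hgcd : Nat.gcd (n ^ 2) (n * 2) = n := by
    rw [sq, Nat.gcd_mul_left, hn.coprime_two_right.gcd_eq_one, mul_one]
  rw [← hgcd]
  exact pow_gcd_eq_one.2 ⟨hsq, htwo⟩

theorem exists_isPrimitiveRoot_bform (hq : IsQuadraticForm q) (hnd : Nondeg q) {p e : ℕ}
    [Fact p.Prime] (hA : ∀ x : A, p ^ (e + 1) • x = 0) {a : A} (ha : p ^ e • a ≠ 0) :
    ∃ b, IsPrimitiveRoot (Bform q a b) (p ^ (e + 1)) := by
  obtain ⟨b, hb⟩ : ∃ b, Bform q a b ^ p ^ e ≠ 1 := by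
    by_contra! h
    exact ha (hnd _ fun b => by rw [hq.bform_nsmul_left, h b])
  have hpow : Bform q a b ^ p ^ (e + 1) = 1 := by
    rw [← hq.bform_nsmul_left, hA, hq.bform_zero_left]
  exact ⟨b, orderOf_eq_prime_pow hb hpow ▸ IsPrimitiveRoot.orderOf _⟩

theorem exists_isotropic_bform_eq (hq : IsQuadraticForm q) {n : ℕ} [NeZero n] {ζ : kˣ}
    (hζ : IsPrimitiveRoot ζ n) {a b : A} (ha : q a = 1) (hab : Bform q a b = ζ)
    (hb : q b ^ n = 1) : ∃ c, q c = 1 ∧ Bform q a c = ζ := by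
  obtain ⟨s, -, hs⟩ := hζ.eq_pow_of_mem_rootsOfUnity ((mem_rootsOfUnity n _).2 hb)
  have haa : Bform q a a = 1 := by rw [hq.bform_self, ha, one_pow]
  refine ⟨b - s • a, ?_, ?_⟩
  · rw [sub_eq_add_neg, apply_add_eq_mul_bform q, hq.1, hq.apply_nsmul, ha, one_pow, mul_one,
      hq.bform_neg_right, hq.bform_nsmul_right, bform_comm, hab, hs, mul_inv_cancel]
  · rw [sub_eq_add_neg, hq.bform_add_right, hq.bform_neg_right, hq.bform_nsmul_right, haa,
      one_pow, inv_one, mul_one, hab]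

def orthogonal (hq : IsQuadraticForm q) (S : Set A) : AddSubgroup A where
  carrier := {y | ∀ x ∈ S, Bform q x y = 1}
  zero_mem' _ _ := hq.bform_zero_right _
  add_mem' hy hz x hx := by rw [hq.bform_add_right, hy x hx, hz x hx, one_mul]
  neg_mem' hy x hx := by rw [hq.bform_neg_right, hy x hx, inv_one]

theorem mem_orthogonal (hq : IsQuadraticForm q) {S : Set A} {y : A} :
    y ∈ hq.orthogonal S ↔ ∀ x ∈ S, Bform q x y = 1 :=
  Iff.rfl

theorem mem_orthogonal_pair (hq : IsQuadraticForm q) {a c y : A} :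
    y ∈ hq.orthogonal {a, c} ↔ Bform q a y = 1 ∧ Bform q c y = 1 := by
  simp [mem_orthogonal]

theorem bform_nsmul_add_nsmul (hq : IsQuadraticForm q) (m l : ℕ) (a c y : A) :
    Bform q (m • a + l • c) y = Bform q a y ^ m * Bform q c y ^ l := by
  rw [hq.bform_add_left, hq.bform_nsmul_left, hq.bform_nsmul_left]

theorem apply_nsmul_add_nsmul (hq : IsQuadraticForm q) {a c : A} (ha : q a = 1) (hc : q c = 1)
    (m l : ℕ) : q (m • a + l • c) = Bform q a c ^ (m * l) := by
  rw [apply_add_eq_mul_bform q, hq.apply_nsmul, hq.apply_nsmul, ha, hc, hq.bform_nsmul_left,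
    hq.bform_nsmul_right, one_pow, one_pow, one_mul, one_mul, ← pow_mul, mul_comm l]

theorem bform_left_nsmul_add_nsmul (hq : IsQuadraticForm q) {a c : A} (ha : q a = 1)
    (m l : ℕ) : Bform q a (m • a + l • c) = Bform q a c ^ l := by
  rw [bform_comm, hq.bform_nsmul_add_nsmul, hq.bform_self, ha, bform_comm, one_pow, one_pow,
    one_mul]

theorem bform_right_nsmul_add_nsmul (hq : IsQuadraticForm q) {a c : A} (hc : q c = 1)
    (m l : ℕ) : Bform q c (m • a + l • c) = Bform q a c ^ m := by
  rw [bform_comm, hq.bform_nsmul_add_nsmul, hq.bform_self, hc, one_pow, one_pow, mul_one]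

section Hyperbolic

variable {n : ℕ} [NeZero n]

theorem eq_zero_of_bform_zmodPairHom_eq_one (hq : IsQuadraticForm q)
    (hA : ∀ x : A, n • x = 0) {a c : A} (ha : q a = 1) (hc : q c = 1)
    (hac : IsPrimitiveRoot (Bform q a c) n) {z : ZMod n × ZMod n}
    (hza : Bform q a (zmodPairHom hA a c z) = 1) (hzc : Bform q c (zmodPairHom hA a c z) = 1) :
    z = 0 := by
  rw [zmodPairHom_apply] at hza hzc
  rw [hq.bform_left_nsmul_add_nsmul ha] at hza
  rw [hq.bform_right_nsmul_add_nsmul hc] at hzc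
  exact Prod.ext (hac.eq_zero_of_pow_val_eq_one hzc) (hac.eq_zero_of_pow_val_eq_one hza)

theorem zmodPairHom_injective (hq : IsQuadraticForm q) (hA : ∀ x : A, n • x = 0) {a c : A}
    (ha : q a = 1) (hc : q c = 1) (hac : IsPrimitiveRoot (Bform q a c) n) :
    Function.Injective (zmodPairHom hA a c) := by
  refine (injective_iff_map_eq_zero _).2 fun z hz => ?_
  refine hq.eq_zero_of_bform_zmodPairHom_eq_one hA ha hc hac ?_ ?_ <;>
    rw [hz, hq.bform_zero_right]

theorem bform_zmodPairHom_orthogonal (hq : IsQuadraticForm q) (hA : ∀ x : A, n • x = 0)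
    (a c : A) :
    ∀ x ∈ (zmodPairHom hA a c).range, ∀ y ∈ hq.orthogonal {a, c}, Bform q x y = 1 := by
  rintro _ ⟨z, rfl⟩ y hy
  rw [mem_orthogonal_pair] at hy
  rw [zmodPairHom_apply, hq.bform_nsmul_add_nsmul, hy.1, hy.2, one_pow, one_pow, one_mul]

theorem exists_sub_zmodPairHom_mem_orthogonal (hq : IsQuadraticForm q)
    (hA : ∀ x : A, n • x = 0) {a c : A} (ha : q a = 1) (hc : q c = 1)
    (hac : IsPrimitiveRoot (Bform q a c) n) (x : A) :
    ∃ z, x - zmodPairHom hA a c z ∈ hq.orthogonal {a, c} := by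
  have hroot : ∀ y, Bform q y x ^ n = 1 := fun y => by
    rw [← hq.bform_nsmul_left, hA, hq.bform_zero_left]
  obtain ⟨l, hl⟩ := hac.exists_pow_val_eq (hroot a)
  obtain ⟨m, hm⟩ := hac.exists_pow_val_eq (hroot c)
  refine ⟨(m, l), ?_⟩
  rw [mem_orthogonal_pair, zmodPairHom_apply, sub_eq_add_neg,
    hq.bform_add_right, hq.bform_add_right, hq.bform_neg_right, hq.bform_neg_right,
    hq.bform_left_nsmul_add_nsmul ha, hq.bform_right_nsmul_add_nsmul hc, hl, hm]
  exact ⟨mul_inv_cancel _, mul_inv_cancel _⟩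

theorem isCompl_range_zmodPairHom_orthogonal (hq : IsQuadraticForm q)
    (hA : ∀ x : A, n • x = 0) {a c : A} (ha : q a = 1) (hc : q c = 1)
    (hac : IsPrimitiveRoot (Bform q a c) n) :
    IsCompl (zmodPairHom hA a c).range (hq.orthogonal {a, c}) := by
  constructor
  · refine AddSubgroup.disjoint_def.2 ?_
    rintro _ ⟨z, rfl⟩ hz
    rw [mem_orthogonal_pair] at hz
    rw [hq.eq_zero_of_bform_zmodPairHom_eq_one hA ha hc hac hz.1 hz.2, map_zero]
  · refine codisjoint_iff.2 (eq_top_iff.2 fun x _ => ?_)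
    obtain ⟨z, hz⟩ := hq.exists_sub_zmodPairHom_mem_orthogonal hA ha hc hac x
    exact AddSubgroup.mem_sup.2 ⟨_, ⟨z, rfl⟩, _, hz, add_sub_cancel _ _⟩

end Hyperbolic

theorem nondeg_restrict_of_codisjoint (hq : IsQuadraticForm q) (hnd : Nondeg q)
    {H K : AddSubgroup A} (hHK : Codisjoint H K) (horth : ∀ x ∈ H, ∀ y ∈ K, Bform q x y = 1) :
    ∀ y ∈ K, (∀ z ∈ K, Bform q y z = 1) → y = 0 := by
  intro y hy hyK
  refine hnd y fun z => ?_
  obtain ⟨u, hu, v, hv, rfl⟩ := AddSubgroup.mem_sup.1 (hHK.eq_top ▸ AddSubgroup.mem_top z)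
  rw [hq.bform_add_right, bform_comm, horth u hu y hy, hyK v hv, one_mul]

end IsQuadraticForm

theorem stmt15_general {k : Type*} [Field k]
    {A : Type*} [AddCommGroup A]
    (p e : ℕ) (hp : p.Prime) (hodd : p ≠ 2) (he : 1 ≤ e)
    (q : A → kˣ) (hq : IsQuadraticForm q) (hnd : Nondeg q)
    (hexp : AddMonoid.exponent A = p ^ e)
    (hgen : AddSubgroup.closure {x : A | q x = 1} = ⊤) :
    ∃ H K : AddSubgroup A, IsCompl H K ∧
      (∀ x ∈ H, ∀ y ∈ K, Bform q x y = 1) ∧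
      (∃ ζ : kˣ, IsPrimitiveRoot ζ (p ^ e) ∧
        ∃ φ : H ≃+ ZMod (p ^ e) × ZMod (p ^ e),
          ∀ x : H, q x = ζ ^ ((φ x).1.val * (φ x).2.val)) ∧
      (∀ y ∈ K, (p ^ e) • y = 0) ∧
      (∀ y ∈ K, (∀ z ∈ K, Bform q y z = 1) → y = 0) := by
  have := Fact.mk hp
  obtain ⟨e, rfl⟩ := Nat.exists_eq_add_of_le' he
  have hA : ∀ x : A, p ^ (e + 1) • x = 0 := hexp ▸ AddMonoid.exponent_nsmul_eq_zero
  obtain ⟨a, ha, hae⟩ := AddMonoid.exists_mem_nsmul_ne_zero_of_closure_eq_top hgen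
    (n := p ^ e) (by rw [hexp, Nat.pow_dvd_pow_iff_le_right hp.one_lt]; omega)
  obtain ⟨b, hab⟩ := hq.exists_isPrimitiveRoot_bform hnd hA hae
  obtain ⟨c, hc, hac⟩ := hq.exists_isotropic_bform_eq hab ha rfl
    (hq.pow_eq_one_of_nsmul_eq_zero (hp.odd_of_ne_two hodd).pow (hA b))
  rw [← hac] at hab
  have hcompl := hq.isCompl_range_zmodPairHom_orthogonal hA ha hc hab
  have horth := hq.bform_zmodPairHom_orthogonal hA a c
  let φ := AddMonoidHom.ofInjective (hq.zmodPairHom_injective hA ha hc hab)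
  refine ⟨_, _, hcompl, horth, ⟨_, hab, φ.symm, fun x => ?_⟩, fun y _ => hA y,
    hq.nondeg_restrict_of_codisjoint hnd hcompl.codisjoint horth⟩
  obtain ⟨z, rfl⟩ := φ.surjective x
  rw [AddEquiv.symm_apply_apply, AddMonoidHom.ofInjective_apply, zmodPairHom_apply,
    hq.apply_nsmul_add_nsmul ha hc]

/-- For odd `p`, an isotropically generated metric `p`-group of exponent `p^e` splits
as an orthogonal direct sum of the hyperbolic metric group `(ℤ/p^e × ℤ/p^e, h)` and a
metric `p`-group of exponent at most `p^e`. -/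
theorem stmt15 {k : Type*} [Field k] [CharZero k] [IsAlgClosed k]
    {A : Type*} [AddCommGroup A] [Finite A]
    (p e : ℕ) (hp : p.Prime) (hodd : p ≠ 2) (he : 1 ≤ e)
    (hpA : IsPGroup p (Multiplicative A))
    (q : A → kˣ) (hq : IsQuadraticForm q) (hnd : Nondeg q)
    (hexp : AddMonoid.exponent A = p ^ e)
    (hgen : AddSubgroup.closure {x : A | q x = 1} = ⊤) :
    ∃ H K : AddSubgroup A, IsCompl H K ∧
      (∀ x ∈ H, ∀ y ∈ K, Bform q x y = 1) ∧
      (∃ ζ : kˣ, IsPrimitiveRoot ζ (p ^ e) ∧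
        ∃ φ : H ≃+ ZMod (p ^ e) × ZMod (p ^ e),
          ∀ x : H, q x = ζ ^ ((φ x).1.val * (φ x).2.val)) ∧
      (∀ y ∈ K, (p ^ e) • y = 0) ∧
      (∀ y ∈ K, (∀ z ∈ K, Bform q y z = 1) → y = 0) :=
  stmt15_general p e hp hodd he q hq hnd hexp hgen
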